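/- arXiv:math/9204221 — 2 statements merged into one kernel-verified Lean document; each statement's English description precedes it below -/
import Mathlib

section
/- Let M be a smooth manifold, let c : ℝ → M be a smooth curve with c(0) = x, and let k ≥ 1. Assume that, writing c in the preferred extended chart of M at x, the curve t ↦ (extChart_x)(c(t)) has vanishing j-th derivative at t = 0 for all 1 ≤ j ≤ k−1. Then there exists a tangent vector v ∈ T_xM such that for every smooth function f : M → ℝ one has (d^k/dt^k)|_{t=0} f(c(t)) = (df)_x(v), where (df)_x denotes the differential (mfderiv) of f at x. -/
open scoped Manifold
open Set Function

noncomputable section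

variable {E : Type*} [NormedAddCommGroup E] [NormedSpace ℝ E]
  {H : Type*} [TopologicalSpace H]

instance {M : Type*} [TopologicalSpace M] [ChartedSpace H M] {I : ModelWithCorners ℝ E H}
    {x : M} : NormedAddCommGroup (TangentSpace I x) :=
  inferInstanceAs (NormedAddCommGroup E)

instance {M : Type*} [TopologicalSpace M] [ChartedSpace H M] {I : ModelWithCorners ℝ E H}
    {x : M} : NormedSpace ℝ (TangentSpace I x) :=
  inferInstanceAs (NormedSpace ℝ E)

/-- The differential `(df)_x(v)` of a real valued function `f` at `x`,
applied to a tangent vector `v`, as a real number. -/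
def dApply (I : ModelWithCorners ℝ E H) {M : Type*} [TopologicalSpace M] [ChartedSpace H M]
    (f : M → ℝ) (x : M) (v : TangentSpace I x) : ℝ :=
  mfderiv I 𝓘(ℝ, ℝ) f x v

/-- A vector field is smooth if it is a smooth section of the tangent bundle. -/
def IsSmoothVectorField (I : ModelWithCorners ℝ E H) {M : Type*} [TopologicalSpace M]
    [ChartedSpace H M] [IsManifold I ((⊤ : ℕ∞) : WithTop ℕ∞) M] (X : ∀ x : M, TangentSpace I x) : Prop :=
  ContMDiff I I.tangent (⊤ : ℕ∞) (fun x => (⟨x, X x⟩ : TangentBundle I M))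

/-- The pullback of a vector field under a map between manifolds, within a set
(Mathlib's `mpullbackWithin`). -/
def mpullbackWithin (I : ModelWithCorners ℝ E H) {E' : Type*} [NormedAddCommGroup E']
    [NormedSpace ℝ E'] {H' : Type*} [TopologicalSpace H'] (I' : ModelWithCorners ℝ E' H')
    {M : Type*} [TopologicalSpace M] [ChartedSpace H M]
    {M' : Type*} [TopologicalSpace M'] [ChartedSpace H' M']
    (f : M → M') (V : ∀ x : M', TangentSpace I' x) (s : Set M) (x : M) :
    TangentSpace I x :=
  (mfderivWithin I I' f s x).inverse (V (f x))

/-- The pullback of a vector field under a map between manifolds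
(Mathlib's `mpullback`): `x ↦ (T_x f)⁻¹ (V (f x))`. -/
def mpullback (I : ModelWithCorners ℝ E H) {E' : Type*} [NormedAddCommGroup E']
    [NormedSpace ℝ E'] {H' : Type*} [TopologicalSpace H'] (I' : ModelWithCorners ℝ E' H')
    {M : Type*} [TopologicalSpace M] [ChartedSpace H M]
    {M' : Type*} [TopologicalSpace M'] [ChartedSpace H' M']
    (f : M → M') (V : ∀ x : M', TangentSpace I' x) (x : M) :
    TangentSpace I x :=
  (mfderiv I I' f x).inverse (V (f x))

/-- The Lie bracket of two vector fields on a manifold (Mathlib's `mlieBracket` convention: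
`[X,Y] = X(Y) - Y(X)`), defined by pulling the vector fields back to the model space via the
preferred chart and taking the Lie bracket of vector fields there. -/
def mlieBracket (I : ModelWithCorners ℝ E H) {M : Type*} [TopologicalSpace M] [ChartedSpace H M]
    (V W : ∀ x : M, TangentSpace I x) (x₀ : M) : TangentSpace I x₀ :=
  mpullback I 𝓘(ℝ, E) (extChartAt I x₀)
    (VectorField.lieBracketWithin ℝ
      (mpullbackWithin 𝓘(ℝ, E) I (extChartAt I x₀).symm V (Set.range I))
      (mpullbackWithin 𝓘(ℝ, E) I (extChartAt I x₀).symm W (Set.range I))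
      (Set.range I)) x₀

/-- A smooth curve of diffeomorphisms through the identity on `M`: a jointly smooth map
`φ : ℝ × M → M` with `φ 0 = id`, each `φ t` bijective, with jointly smooth inverse. -/
structure DiffeoCurve (I : ModelWithCorners ℝ E H) (M : Type*) [TopologicalSpace M]
    [ChartedSpace H M] [IsManifold I ((⊤ : ℕ∞) : WithTop ℕ∞) M] where
  toFun : ℝ → M → M
  invFun : ℝ → M → M
  smooth_toFun : ContMDiff (𝓘(ℝ, ℝ).prod I) I (⊤ : ℕ∞) fun p : ℝ × M => toFun p.1 p.2
  smooth_invFun : ContMDiff (𝓘(ℝ, ℝ).prod I) I (⊤ : ℕ∞) fun p : ℝ × M => invFun p.1 p.2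
  toFun_zero : ∀ x, toFun 0 x = x
  left_inv : ∀ t x, invFun t (toFun t x) = x
  right_inv : ∀ t x, toFun t (invFun t x) = x

/-- `φ` has first non-vanishing derivative `k! • X` at `0`: for every point `x` and smooth
`f : M → ℝ`, the `j`-th derivative of `t ↦ f (φ_t x)` at `0` vanishes for `1 ≤ j ≤ k-1`, and the
`k`-th derivative equals `k! * (df)_x (X x)`. -/
def HasFirstNonvanishingDeriv {I : ModelWithCorners ℝ E H} {M : Type*} [TopologicalSpace M]
    [ChartedSpace H M] [IsManifold I ((⊤ : ℕ∞) : WithTop ℕ∞) M] (φ : DiffeoCurve I M) (k : ℕ)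
    (X : ∀ x : M, TangentSpace I x) : Prop :=
  ∀ (x : M) (f : M → ℝ), ContMDiff I 𝓘(ℝ, ℝ) (⊤ : ℕ∞) f →
    (∀ j : ℕ, 1 ≤ j → j < k → iteratedDeriv j (fun t => f (φ.toFun t x)) 0 = 0) ∧
    iteratedDeriv k (fun t => f (φ.toFun t x)) 0 = (k.factorial : ℝ) * dApply I f x (X x)

/-- The commutator `(α, β) ↦ β⁻¹ ∘ α⁻¹ ∘ β ∘ α` on pairs (curve, inverse curve). -/
def commOp {M : Type*} (p q : (ℝ → M → M) × (ℝ → M → M)) : (ℝ → M → M) × (ℝ → M → M) :=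
  (fun t x => q.2 t (p.2 t (q.1 t (p.1 t x))),
   fun t x => p.2 t (q.2 t (p.1 t (q.1 t x))))

/-! In the chart `e` at `x`, `f ∘ c = (f ∘ e.symm) ∘ γ` near `0`, where `γ = e ∘ c`. In Faà di
Bruno's formula for the `k`-th derivative of this composition, every ordered partition of
`{1, …, k}` into at least two blocks has a block of size `j` with `1 ≤ j < k`, so its term carries
the factor `γ⁽ʲ⁾(0) = 0`. Only the one-block term `D(f ∘ e.symm)(γ 0) (γ⁽ᵏ⁾(0))` survives, so
`v = γ⁽ᵏ⁾(0)` works. -/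

namespace OrderedFinpartition

def single (n : ℕ) (hn : 0 < n) : OrderedFinpartition n where
  length := 1
  partSize _ := n
  partSize_pos _ := hn
  emb _ := id
  emb_strictMono _ := strictMono_id
  parts_strictMono := Subsingleton.strictMono _
  disjoint m _ m' _ h := absurd (Subsingleton.elim m m') h
  cover x := ⟨0, x, rfl⟩

variable {n : ℕ}

theorem sum_partSize (c : OrderedFinpartition n) : ∑ m, c.partSize m = n := by
  simpa using c.sum_sigma_eq_sum fun _ ↦ (1 : ℕ)

theorem eq_single_of_length_eq_one (hn : 0 < n) {c : OrderedFinpartition n}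
    (hc : c.length = 1) : c = single n hn := by
  obtain ⟨length, partSize, partSize_pos, emb, emb_strictMono, parts_strictMono, disjoint, cover⟩ :=
    c
  subst hc
  obtain rfl : partSize = fun _ ↦ n := by
    funext m
    simpa [Subsingleton.elim m 0] using
      sum_partSize ⟨1, partSize, partSize_pos, emb, emb_strictMono, parts_strictMono, disjoint,
        cover⟩
  obtain rfl : emb = fun _ ↦ id := funext fun m ↦ (emb_strictMono m).eq_id
  rfl

theorem partSize_lt_of_one_lt_length {c : OrderedFinpartition n} (hc : 1 < c.length)
    (m : Fin c.length) : c.partSize m < n := by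
  have : Nontrivial (Fin c.length) := Fin.nontrivial_iff_two_le.mpr hc
  obtain ⟨m', hm'⟩ := exists_ne m
  calc c.partSize m < ∑ i, c.partSize i :=
        Finset.single_lt_sum hm' (Finset.mem_univ _) (Finset.mem_univ _) (c.partSize_pos m')
          fun _ _ _ ↦ Nat.zero_le _
    _ = n := c.sum_partSize

end OrderedFinpartition

theorem iteratedDeriv_vcomp_of_iteratedDeriv_eq_zero {𝕜 E F : Type*} [NontriviallyNormedField 𝕜]
    [NormedAddCommGroup E] [NormedSpace 𝕜 E] [NormedAddCommGroup F] [NormedSpace 𝕜 F]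
    {g : E → F} {f : 𝕜 → E} {x : 𝕜} {k : ℕ}
    (hg : ContDiffAt 𝕜 k g (f x)) (hf : ContDiffAt 𝕜 k f x) (hk : 0 < k)
    (hvanish : ∀ j, 1 ≤ j → j < k → iteratedDeriv j f x = 0) :
    iteratedDeriv k (g ∘ f) x = fderiv 𝕜 g (f x) (iteratedDeriv k f x) := by
  rw [iteratedDeriv_vcomp_eq_sum_orderedFinpartition hg hf le_rfl,
    Finset.sum_eq_single_of_mem (OrderedFinpartition.single k hk) (Finset.mem_univ _)]
  · exact iteratedFDeriv_one_apply _
  intro c _ hc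
  have hlength : 1 < c.length := by
    have := c.length_pos hk
    have := mt (OrderedFinpartition.eq_single_of_length_eq_one hk) hc
    omega
  apply ContinuousMultilinearMap.map_coord_zero _ ⟨0, by omega⟩
  exact hvanish _ (c.partSize_pos _) (c.partSize_lt_of_one_lt_length hlength _)

theorem iteratedDeriv_comp_eq_mfderiv_iteratedDeriv_extChartAt {𝕜 : Type*}
    [NontriviallyNormedField 𝕜] {E : Type*} [NormedAddCommGroup E] [NormedSpace 𝕜 E]
    {H : Type*} [TopologicalSpace H] {I : ModelWithCorners 𝕜 E H} [I.Boundaryless]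
    {M : Type*} [TopologicalSpace M] [ChartedSpace H M] {k : ℕ} [IsManifold I k M]
    {F : Type*} [NormedAddCommGroup F] [NormedSpace 𝕜 F] {f : M → F} {c : 𝕜 → M} {t : 𝕜}
    (hf : ContMDiffAt I 𝓘(𝕜, F) k f (c t)) (hc : ContMDiffAt 𝓘(𝕜) I k c t) (hk : 0 < k)
    (hvanish : ∀ j, 1 ≤ j → j < k → iteratedDeriv j (extChartAt I (c t) ∘ c) t = 0) :
    iteratedDeriv k (f ∘ c) t =
      mfderiv I 𝓘(𝕜, F) f (c t) (iteratedDeriv k (extChartAt I (c t) ∘ c) t : E) := by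
  set e := extChartAt I (c t)
  have hf_chart : ContDiffAt 𝕜 k (f ∘ e.symm) (e (c t)) := by
    have he_symm := (contMDiffOn_extChartAt_symm (n := k) (c t)).contMDiffAt
      (extChartAt_target_mem_nhds (I := I) (c t))
    exact (hf.comp_of_eq he_symm (extChartAt_to_inv (c t))).contDiffAt
  have hc_chart : ContDiffAt 𝕜 k (e ∘ c) t := (contMDiffAt_extChartAt.comp t hc).contDiffAt
  have hfc : f ∘ c =ᶠ[nhds t] (f ∘ e.symm) ∘ (e ∘ c) := by
    filter_upwards [hc.continuousAt.preimage_mem_nhds (extChartAt_source_mem_nhds (I := I) (c t))]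
      with s hs
    simp only [comp_apply, e.left_inv hs]
  have hmfderiv : mfderiv I 𝓘(𝕜, F) f (c t) = fderiv 𝕜 (f ∘ e.symm) (e (c t)) := by
    rw [(hf.mdifferentiableAt (mod_cast hk.ne')).mfderiv, I.range_eq_univ, fderivWithin_univ]
    rfl
  rw [hfc.iteratedDeriv_eq, hmfderiv,
    iteratedDeriv_vcomp_of_iteratedDeriv_eq_zero hf_chart hc_chart hk hvanish]
  rfl

theorem kth_deriv_eq_tangent_vector_general
    {E : Type*} [NormedAddCommGroup E] [NormedSpace ℝ E]
    {H : Type*} [TopologicalSpace H] {I : ModelWithCorners ℝ E H} [I.Boundaryless]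
    {M : Type*} [TopologicalSpace M] [ChartedSpace H M] [IsManifold I ((⊤ : ℕ∞) : WithTop ℕ∞) M]
    (c : ℝ → M) (hc : ContMDiff 𝓘(ℝ, ℝ) I (⊤ : ℕ∞) c) (x : M) (hcx : c 0 = x)
    (k : ℕ) (hk : 1 ≤ k)
    (hvanish : ∀ j : ℕ, 1 ≤ j → j < k →
      iteratedDeriv j (fun t => extChartAt I x (c t)) 0 = 0) :
    ∃ v : TangentSpace I x, ∀ f : M → ℝ, ContMDiff I 𝓘(ℝ, ℝ) (⊤ : ℕ∞) f →
      iteratedDeriv k (fun t => f (c t)) 0 = dApply I f x v := by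
  subst hcx
  refine ⟨iteratedDeriv k (fun t => extChartAt I (c 0) (c t)) 0, fun f hf => ?_⟩
  have hk_le : ((k : ℕ∞) : WithTop ℕ∞) ≤ ((⊤ : ℕ∞) : WithTop ℕ∞) := mod_cast le_top
  exact iteratedDeriv_comp_eq_mfderiv_iteratedDeriv_extChartAt ((hf _).of_le hk_le)
    ((hc _).of_le hk_le) hk hvanish

/-- If `c : ℝ → M` is a smooth curve with `c 0 = x` whose expression in the
preferred extended chart at `x` has vanishing derivatives at `0` of orders `1,…,k-1`, then
there is a tangent vector `v ∈ T_x M` such that for every smooth `f : M → ℝ` the `k`-th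
derivative of `t ↦ f (c t)` at `0` equals `(df)_x v`. -/
theorem kth_deriv_eq_tangent_vector
    {E : Type*} [NormedAddCommGroup E] [NormedSpace ℝ E] [FiniteDimensional ℝ E]
    {H : Type*} [TopologicalSpace H] {I : ModelWithCorners ℝ E H} [I.Boundaryless]
    {M : Type*} [TopologicalSpace M] [ChartedSpace H M] [IsManifold I ((⊤ : ℕ∞) : WithTop ℕ∞) M]
    (c : ℝ → M) (hc : ContMDiff 𝓘(ℝ, ℝ) I (⊤ : ℕ∞) c) (x : M) (hcx : c 0 = x)
    (k : ℕ) (hk : 1 ≤ k)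
    (hvanish : ∀ j : ℕ, 1 ≤ j → j < k →
      iteratedDeriv j (fun t => extChartAt I x (c t)) 0 = 0) :
    ∃ v : TangentSpace I x, ∀ f : M → ℝ, ContMDiff I 𝓘(ℝ, ℝ) (⊤ : ℕ∞) f →
      iteratedDeriv k (fun t => f (c t)) 0 = dApply I f x v :=
  kth_deriv_eq_tangent_vector_general c hc x hcx k hk hvanish
end
end

section
/- Let M be a smooth manifold, let φ be a smooth curve of diffeomorphisms through the identity on M, let k ≥ 1, and let X be a smooth vector field on M such that φ has first non-vanishing derivative k!·X at 0. Then the inverse curve t ↦ φ_t^{-1} has first non-vanishing derivative −k!·X at 0; that is, for every smooth f : M → ℝ and every x ∈ M, the j-th derivative of t ↦ f(φ_t^{-1}(x)) at t = 0 vanishes for 1 ≤ j ≤ k−1, and its k-th derivative at t = 0 equals −k!·(df)_x(X(x)). -/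
/-!
Put `F (t, s) = f (φ_t⁻¹ (φ_s x))`. Then `F (t, t) = f x`, `F (t, 0) = f (φ_t⁻¹ x)` and
`F (0, s) = f (φ_s x)`; moreover, for every fixed `t` the derivatives of `s ↦ F (t, s)` at `0` of
order `1, …, k - 1` vanish, because `f ∘ φ_t⁻¹` is smooth. In the binomial expansion of the
`j`-th derivative of the constant `t ↦ F (t, t)` at `0`, each mixed term `∂ₜᵃ ∂ₛᵇ F (0, 0)`
(`a, b ≥ 1`, `b < k`) is a `t`-derivative of a function vanishing on the axis `s = 0`, so
`0 = ∂ₜʲ F (0, 0) + ∂ₛʲ F (0, 0)` for `1 ≤ j ≤ k`.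
-/

open scoped Manifold
open Set Function

noncomputable section

variable {E : Type*} [NormedAddCommGroup E] [NormedSpace ℝ E]
  {H : Type*} [TopologicalSpace H]

open scoped ContDiff

def derivFst (G : ℝ × ℝ → ℝ) (p : ℝ × ℝ) : ℝ := deriv (fun u => G (u, p.2)) p.1

def derivSnd (G : ℝ × ℝ → ℝ) (p : ℝ × ℝ) : ℝ := deriv (fun s => G (p.1, s)) p.2

section PartialDerivatives

variable {G : ℝ × ℝ → ℝ}

theorem iterate_derivFst_apply (n : ℕ) (p : ℝ × ℝ) :
    derivFst^[n] G p = iteratedDeriv n (fun u => G (u, p.2)) p.1 := by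
  induction n generalizing p with
  | zero => simp
  | succ n ih =>
    rw [iterate_succ_apply', iteratedDeriv_succ]
    exact congrArg (deriv · p.1) (funext fun u => ih (u, p.2))

theorem iterate_derivSnd_apply (n : ℕ) (p : ℝ × ℝ) :
    derivSnd^[n] G p = iteratedDeriv n (fun s => G (p.1, s)) p.2 := by
  induction n generalizing p with
  | zero => simp
  | succ n ih =>
    rw [iterate_succ_apply', iteratedDeriv_succ]
    exact congrArg (deriv · p.2) (funext fun s => ih (p.1, s))

theorem iterate_derivFst_apply_eq_zero (hG : ∀ t, G (t, 0) = 0) (n : ℕ) (t : ℝ) :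
    derivFst^[n] G (t, 0) = 0 := by
  simp [iterate_derivFst_apply, hG]

theorem derivFst_eq_fderiv {p : ℝ × ℝ} (hG : DifferentiableAt ℝ G p) :
    derivFst G p = fderiv ℝ G p (1, 0) := by
  have h : HasDerivAt (fun u : ℝ => (u, p.2)) ((1 : ℝ), (0 : ℝ)) p.1 :=
    (hasDerivAt_id p.1).prodMk (hasDerivAt_const p.1 p.2)
  exact (hG.hasFDerivAt.comp_hasDerivAt p.1 h).deriv

theorem derivSnd_eq_fderiv {p : ℝ × ℝ} (hG : DifferentiableAt ℝ G p) :
    derivSnd G p = fderiv ℝ G p (0, 1) := by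
  have h : HasDerivAt (fun s : ℝ => (p.1, s)) ((0 : ℝ), (1 : ℝ)) p.2 :=
    (hasDerivAt_const p.2 p.1).prodMk (hasDerivAt_id p.2)
  exact (hG.hasFDerivAt.comp_hasDerivAt p.2 h).deriv

theorem derivFst_eq_fderiv_apply (hG : Differentiable ℝ G) :
    derivFst G = fun p => fderiv ℝ G p (1, 0) :=
  funext fun p => derivFst_eq_fderiv (hG p)

theorem derivSnd_eq_fderiv_apply (hG : Differentiable ℝ G) :
    derivSnd G = fun p => fderiv ℝ G p (0, 1) :=
  funext fun p => derivSnd_eq_fderiv (hG p)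

theorem ContDiff.derivFst (hG : ContDiff ℝ ∞ G) : ContDiff ℝ ∞ (derivFst G) := by
  rw [derivFst_eq_fderiv_apply (hG.differentiable (by simp))]
  exact (hG.fderiv_right (m := ∞) le_rfl).clm_apply contDiff_const

theorem ContDiff.derivSnd (hG : ContDiff ℝ ∞ G) : ContDiff ℝ ∞ (derivSnd G) := by
  rw [derivSnd_eq_fderiv_apply (hG.differentiable (by simp))]
  exact (hG.fderiv_right (m := ∞) le_rfl).clm_apply contDiff_const

theorem derivFst_derivSnd_comm (hG : ContDiff ℝ ∞ G) :
    derivFst (derivSnd G) = derivSnd (derivFst G) := by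
  have hG' : Differentiable ℝ (fderiv ℝ G) :=
    (hG.fderiv_right (m := ∞) le_rfl).differentiable (by simp)
  have hfderiv_apply : ∀ p v w,
      fderiv ℝ (fun q => fderiv ℝ G q v) p w = fderiv ℝ (fderiv ℝ G) p w v :=
    fun p v w => by
      rw [fderiv_clm_apply (hG' p) (differentiableAt_const v)]
      simp
  rw [derivFst_eq_fderiv_apply (hG.derivSnd.differentiable (by simp)),
    derivSnd_eq_fderiv_apply (hG.derivFst.differentiable (by simp)),
    derivSnd_eq_fderiv_apply (hG.differentiable (by simp)),
    derivFst_eq_fderiv_apply (hG.differentiable (by simp))]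
  funext p
  rw [hfderiv_apply, hfderiv_apply]
  exact (hG.contDiffAt.isSymmSndFDerivAt (by simp [ENat.LEInfty.out])).eq _ _

theorem derivFst_iterate_derivSnd_comm (hG : ContDiff ℝ ∞ G) (n : ℕ) :
    derivFst (derivSnd^[n] G) = derivSnd^[n] (derivFst G) := by
  induction n generalizing G with
  | zero => rfl
  | succ n ih =>
    rw [iterate_succ_apply, iterate_succ_apply, ih hG.derivSnd,
      derivFst_derivSnd_comm hG]

theorem deriv_comp_diag (hG : Differentiable ℝ G) :
    deriv (fun t => G (t, t)) = fun t => derivFst G (t, t) + derivSnd G (t, t) := by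
  funext t
  have h : HasDerivAt (fun t : ℝ => (t, t)) ((1 : ℝ), (1 : ℝ)) t :=
    (hasDerivAt_id t).prodMk (hasDerivAt_id t)
  rw [show (fun t => G (t, t)) = G ∘ fun t => (t, t) from rfl,
    ((hG (t, t)).hasFDerivAt.comp_hasDerivAt (f := fun t : ℝ => (t, t)) t h).deriv,
    derivFst_eq_fderiv (hG _), derivSnd_eq_fderiv (hG _), ← map_add]
  simp

theorem iteratedDeriv_comp_diag_eq_add (hG : ContDiff ℝ ∞ G) (n : ℕ)
    (hvanish : ∀ b, 1 ≤ b → b ≤ n → ∀ t, derivSnd^[b] G (t, 0) = 0) :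
    iteratedDeriv (n + 1) (fun t => G (t, t)) 0 =
      derivFst^[n + 1] G (0, 0) + derivSnd^[n + 1] G (0, 0) := by
  induction n generalizing G with
  | zero =>
    simp [deriv_comp_diag (hG.differentiable (by simp))]
  | succ n ih =>
    have hdiag : ∀ {H : ℝ × ℝ → ℝ}, ContDiff ℝ ∞ H →
        ContDiffAt ℝ (n + 1) (fun t => H (t, t)) 0 := fun hH =>
      ((hH.comp (contDiff_id.prodMk contDiff_id)).of_le (mod_cast le_top)).contDiffAt
    have hFst := ih hG.derivFst fun b hb1 hbn t => by
      rw [← derivFst_iterate_derivSnd_comm hG]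
      exact iterate_derivFst_apply_eq_zero (hvanish b hb1 (by omega)) 1 t
    have hSnd := ih hG.derivSnd fun b hb1 hbn t => by
      rw [← iterate_succ_apply]
      exact hvanish (b + 1) (by omega) (by omega) t
    have hcross₁ : derivSnd^[n + 1] (derivFst G) (0, 0) = 0 := by
      rw [← derivFst_iterate_derivSnd_comm hG]
      exact iterate_derivFst_apply_eq_zero (hvanish (n + 1) (by omega) le_rfl) 1 0
    have hcross₂ : derivFst^[n + 1] (derivSnd G) (0, 0) = 0 :=
      iterate_derivFst_apply_eq_zero (hvanish 1 le_rfl (by omega)) (n + 1) 0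
    rw [iteratedDeriv_succ', deriv_comp_diag (hG.differentiable (by simp)),
      iteratedDeriv_fun_add (hdiag hG.derivFst) (hdiag hG.derivSnd), hFst, hSnd, hcross₁,
      hcross₂, add_zero, zero_add, iterate_succ_apply derivFst (n + 1),
      iterate_succ_apply derivSnd (n + 1)]

theorem iteratedDeriv_fst_slice_eq_neg_snd_slice (hG : ContDiff ℝ ∞ G)
    (hdiag : ∀ t, G (t, t) = G (0, 0)) {j : ℕ} (hj : 1 ≤ j)
    (hvanish : ∀ b, 1 ≤ b → b < j → ∀ t, iteratedDeriv b (fun s => G (t, s)) 0 = 0) :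
    iteratedDeriv j (fun t => G (t, 0)) 0 = -iteratedDeriv j (fun s => G (0, s)) 0 := by
  obtain ⟨n, rfl⟩ : ∃ n, j = n + 1 := ⟨j - 1, by omega⟩
  have h := iteratedDeriv_comp_diag_eq_add hG n fun b hb1 hbn t => by
    rw [iterate_derivSnd_apply]
    exact hvanish b hb1 (by omega) t
  rw [funext hdiag, iteratedDeriv_const, iterate_derivFst_apply, iterate_derivSnd_apply] at h
  simp only [Nat.add_one_ne_zero, if_false] at h
  linarith

end PartialDerivatives

namespace DiffeoCurve

variable {I : ModelWithCorners ℝ E H} {M : Type*} [TopologicalSpace M] [ChartedSpace H M]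
  [IsManifold I ∞ M] (φ : DiffeoCurve I M)

theorem invFun_zero (x : M) : φ.invFun 0 x = x := by
  simpa only [φ.toFun_zero] using φ.left_inv 0 x

theorem contMDiff_invFun (t : ℝ) : ContMDiff I I ∞ (φ.invFun t) :=
  φ.smooth_invFun.comp (contMDiff_const.prodMk contMDiff_id)

theorem contDiff_invFun_toFun {f : M → ℝ} (hf : ContMDiff I 𝓘(ℝ, ℝ) ∞ f) (x : M) :
    ContDiff ℝ ∞ fun p : ℝ × ℝ => f (φ.invFun p.1 (φ.toFun p.2 x)) := by
  have htoFun : ContMDiff 𝓘(ℝ, ℝ × ℝ) I ∞ fun p : ℝ × ℝ => φ.toFun p.2 x :=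
    φ.smooth_toFun.comp (contDiff_snd.contMDiff.prodMk contMDiff_const)
  exact (hf.comp (φ.smooth_invFun.comp (contDiff_fst.contMDiff.prodMk htoFun))).contDiff

theorem iteratedDeriv_invFun_eq_neg {f : M → ℝ} (hf : ContMDiff I 𝓘(ℝ, ℝ) ∞ f) (x : M)
    {j : ℕ} (hj : 1 ≤ j)
    (hvanish : ∀ g : M → ℝ, ContMDiff I 𝓘(ℝ, ℝ) ∞ g →
      ∀ b, 1 ≤ b → b < j → iteratedDeriv b (fun s => g (φ.toFun s x)) 0 = 0) :
    iteratedDeriv j (fun t => f (φ.invFun t x)) 0 =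
      -iteratedDeriv j (fun s => f (φ.toFun s x)) 0 := by
  simpa only [φ.toFun_zero, φ.invFun_zero] using
    iteratedDeriv_fst_slice_eq_neg_snd_slice (φ.contDiff_invFun_toFun hf x)
      (fun t => by simp only [φ.left_inv]) hj
      (fun b hb1 hbj t => hvanish _ (hf.comp (φ.contMDiff_invFun t)) b hb1 hbj)

end DiffeoCurve

theorem inverse_curve_first_nonvanishing_deriv_general
    {E : Type*} [NormedAddCommGroup E] [NormedSpace ℝ E]
    {H : Type*} [TopologicalSpace H] {I : ModelWithCorners ℝ E H}
    {M : Type*} [TopologicalSpace M] [ChartedSpace H M] [IsManifold I ((⊤ : ℕ∞) : WithTop ℕ∞) M]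
    (φ : DiffeoCurve I M) (k : ℕ) (hk : 1 ≤ k)
    (X : ∀ x : M, TangentSpace I x)
    (hφX : HasFirstNonvanishingDeriv φ k X)
    (f : M → ℝ) (hf : ContMDiff I 𝓘(ℝ, ℝ) (⊤ : ℕ∞) f) (x : M) :
    (∀ j : ℕ, 1 ≤ j → j < k →
      iteratedDeriv j (fun t => f (φ.invFun t x)) 0 = 0) ∧
    iteratedDeriv k (fun t => f (φ.invFun t x)) 0 =
      -((k.factorial : ℝ) * dApply I f x (X x)) := by
  have hvanish (j : ℕ) (hjk : j ≤ k) (g : M → ℝ) (hg : ContMDiff I 𝓘(ℝ, ℝ) ∞ g) (b : ℕ)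
      (hb : 1 ≤ b) (hbj : b < j) : iteratedDeriv b (fun s => g (φ.toFun s x)) 0 = 0 :=
    (hφX x g hg).1 b hb (by omega)
  obtain ⟨hlow, htop⟩ := hφX x f hf
  refine ⟨fun j hj hjk => ?_, ?_⟩
  · rw [φ.iteratedDeriv_invFun_eq_neg hf x hj (hvanish j hjk.le), hlow j hj hjk, neg_zero]
  · rw [φ.iteratedDeriv_invFun_eq_neg hf x hk (hvanish k le_rfl), htop]

/-- If the curve of diffeomorphisms `φ` has first non-vanishing derivative
`k! • X` at `0`, then the inverse curve `t ↦ φ_t⁻¹` has first non-vanishing derivative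
`-k! • X` at `0`. -/
theorem inverse_curve_first_nonvanishing_deriv
    {E : Type*} [NormedAddCommGroup E] [NormedSpace ℝ E] [FiniteDimensional ℝ E]
    {H : Type*} [TopologicalSpace H] {I : ModelWithCorners ℝ E H} [I.Boundaryless]
    {M : Type*} [TopologicalSpace M] [ChartedSpace H M] [IsManifold I ((⊤ : ℕ∞) : WithTop ℕ∞) M]
    (φ : DiffeoCurve I M) (k : ℕ) (hk : 1 ≤ k)
    (X : ∀ x : M, TangentSpace I x) (hX : IsSmoothVectorField I X)
    (hφX : HasFirstNonvanishingDeriv φ k X)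
    (f : M → ℝ) (hf : ContMDiff I 𝓘(ℝ, ℝ) (⊤ : ℕ∞) f) (x : M) :
    (∀ j : ℕ, 1 ≤ j → j < k →
      iteratedDeriv j (fun t => f (φ.invFun t x)) 0 = 0) ∧
    iteratedDeriv k (fun t => f (φ.invFun t x)) 0 =
      -((k.factorial : ℝ) * dApply I f x (X x)) :=
  inverse_curve_first_nonvanishing_deriv_general φ k hk X hφX f hf x
end
end
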